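/- Let f be a C¹ real function on an open subinterval of (0, ∞) and define u : ℝ⁴ × ℝ³ → ℝ by u(x, t) = ‖t‖ − f(‖x‖). Then at every point (x, t) with r := ‖x‖ > 0 in the domain of f and ‖t‖ > 0, the squared norm of the horizontal gradient of u equals Σᵢ₌₁⁴ (ξᵢu)² = 4r² + f′(r)². -/

import Mathlib

/-!
Write `u = ‖t‖ - f(‖x‖)` and let `Tᵢ(x) ∈ ℝ³` be the vertical part of `ξᵢ`, whose horizontal part
is the basis vector `eᵢ`. The chain rule gives `ξᵢu = ⟨t, Tᵢ(x)⟩/‖t‖ - f′(r) xᵢ/r`. The vectors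
`Tᵢ(x)` are the rows of `2‖x‖` times a matrix with orthonormal columns, so
`Σᵢ ⟨t, Tᵢ(x)⟩² = 4‖x‖²‖t‖²`, and `Σᵢ xᵢ Tᵢ(x) = 0`, so the cross terms cancel.
-/

open Set

/-- The horizontal vector fields `ξ₁, ξ₂, ξ₃, ξ₄` of the quaternionic Heisenberg
group, on `ℝ⁷ ≃ ℝ⁴ × ℝ³` with coordinates `(x₁,x₂,x₃,x₄,t₁,t₂,t₃)`. -/
noncomputable def xiVF : Fin 4 → (Fin 7 → ℝ) → (Fin 7 → ℝ)
  | 0 => fun p => ![1, 0, 0, 0, 2 * p 1, 2 * p 2, 2 * p 3]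
  | 1 => fun p => ![0, 1, 0, 0, -2 * p 0, -2 * p 3, 2 * p 2]
  | 2 => fun p => ![0, 0, 1, 0, 2 * p 3, -2 * p 0, -2 * p 1]
  | 3 => fun p => ![0, 0, 0, 1, -2 * p 2, 2 * p 1, -2 * p 0]

/-- The directional derivative `ξᵢ u` of a function `u` along `ξᵢ`. -/
noncomputable def xiD (i : Fin 4) (u : (Fin 7 → ℝ) → ℝ) (p : Fin 7 → ℝ) : ℝ :=
  fderiv ℝ u p (xiVF i p)

/-- The norm of the horizontal gradient, `|∇₀u| = (Σᵢ (ξᵢu)²)^{1/2}`. -/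
noncomputable def hGradNorm (u : (Fin 7 → ℝ) → ℝ) (p : Fin 7 → ℝ) : ℝ :=
  Real.sqrt (∑ i : Fin 4, (xiD i u p) ^ 2)

/-- The horizontal mean curvature `H⁰ = Σᵢ ξᵢ(ξᵢu / |∇₀u|)` of the level
hypersurface of `u`. -/
noncomputable def hMeanCurv (u : (Fin 7 → ℝ) → ℝ) (p : Fin 7 → ℝ) : ℝ :=
  ∑ i : Fin 4, xiD i (fun q => xiD i u q / hGradNorm u q) p

/-- The horizontal radius `‖x‖ = (x₁²+x₂²+x₃²+x₄²)^{1/2}`. -/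
noncomputable def nx (p : Fin 7 → ℝ) : ℝ :=
  Real.sqrt (p 0 ^ 2 + p 1 ^ 2 + p 2 ^ 2 + p 3 ^ 2)

/-- The vertical radius `‖t‖ = (t₁²+t₂²+t₃²)^{1/2}`. -/
noncomputable def nt (p : Fin 7 → ℝ) : ℝ :=
  Real.sqrt (p 4 ^ 2 + p 5 ^ 2 + p 6 ^ 2)

open ContinuousLinearMap

theorem hasFDerivAt_sqrt_sum_sq {ι : Type*} [Fintype ι] (S : Finset ι) {p : ι → ℝ}
    (hp : ∑ k ∈ S, p k ^ 2 ≠ 0) :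
    HasFDerivAt (fun q : ι → ℝ => √(∑ k ∈ S, q k ^ 2))
      ((√(∑ k ∈ S, p k ^ 2))⁻¹ • ∑ k ∈ S, p k • (proj k : (ι → ℝ) →L[ℝ] ℝ)) p := by
  have hsum : HasFDerivAt (fun q : ι → ℝ => ∑ k ∈ S, q k ^ 2)
      (∑ k ∈ S, (2 * p k) • (proj k : (ι → ℝ) →L[ℝ] ℝ)) p :=
    HasFDerivAt.fun_sum fun k _ => by simpa using (hasFDerivAt_apply (𝕜 := ℝ) k p).pow 2
  refine (hsum.sqrt hp).congr_fderiv (ContinuousLinearMap.ext fun v => ?_)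
  simp only [smul_apply, sum_apply, proj_apply, smul_eq_mul, mul_assoc, ← Finset.mul_sum]
  field_simp

def xCoords : Finset (Fin 7) := {0, 1, 2, 3}

def tCoords : Finset (Fin 7) := {4, 5, 6}

theorem sum_xCoords (g : Fin 7 → ℝ) : ∑ k ∈ xCoords, g k = g 0 + g 1 + g 2 + g 3 := by
  simp [xCoords, Finset.sum_insert, add_assoc]

theorem sum_tCoords (g : Fin 7 → ℝ) : ∑ k ∈ tCoords, g k = g 4 + g 5 + g 6 := by
  simp [tCoords, Finset.sum_insert, add_assoc]

theorem nx_eq (q : Fin 7 → ℝ) : nx q = √(∑ k ∈ xCoords, q k ^ 2) := by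
  rw [nx, sum_xCoords]

theorem nt_eq (q : Fin 7 → ℝ) : nt q = √(∑ k ∈ tCoords, q k ^ 2) := by
  rw [nt, sum_tCoords]

theorem hasFDerivAt_nx {p : Fin 7 → ℝ} (hp : nx p ≠ 0) :
    HasFDerivAt nx ((nx p)⁻¹ • ∑ k ∈ xCoords, p k • (proj k : (Fin 7 → ℝ) →L[ℝ] ℝ)) p := by
  simp only [funext nx_eq] at hp ⊢
  exact hasFDerivAt_sqrt_sum_sq xCoords (fun h => hp (by rw [h, Real.sqrt_zero]))

theorem hasFDerivAt_nt {p : Fin 7 → ℝ} (hp : nt p ≠ 0) :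
    HasFDerivAt nt ((nt p)⁻¹ • ∑ k ∈ tCoords, p k • (proj k : (Fin 7 → ℝ) →L[ℝ] ℝ)) p := by
  simp only [funext nt_eq] at hp ⊢
  exact hasFDerivAt_sqrt_sum_sq tCoords (fun h => hp (by rw [h, Real.sqrt_zero]))

theorem xiD_sub_comp_nx {f : ℝ → ℝ} {p : Fin 7 → ℝ} (hf : DifferentiableAt ℝ f (nx p))
    (hx : nx p ≠ 0) (ht : nt p ≠ 0) (i : Fin 4) :
    xiD i (fun q => nt q - f (nx q)) p =
      (∑ k ∈ tCoords, p k * xiVF i p k) / nt p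
        - deriv f (nx p) * (∑ k ∈ xCoords, p k * xiVF i p k) / nx p := by
  have hu : HasFDerivAt (fun q => nt q - f (nx q)) _ p :=
    (hasFDerivAt_nt ht).sub (hf.hasDerivAt.comp_hasFDerivAt p (hasFDerivAt_nx hx))
  simp only [xiD, hu.fderiv, sub_apply, smul_apply, sum_apply, proj_apply, smul_eq_mul]
  ring

theorem sum_xiVF_vertical_sq (p : Fin 7 → ℝ) :
    ∑ i : Fin 4, (∑ k ∈ tCoords, p k * xiVF i p k) ^ 2 =
      4 * (∑ k ∈ xCoords, p k ^ 2) * ∑ k ∈ tCoords, p k ^ 2 := by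
  simp only [Fin.sum_univ_four, sum_xCoords, sum_tCoords, xiVF, Matrix.cons_val]
  ring

theorem sum_xiVF_horizontal_sq (p : Fin 7 → ℝ) :
    ∑ i : Fin 4, (∑ k ∈ xCoords, p k * xiVF i p k) ^ 2 = ∑ k ∈ xCoords, p k ^ 2 := by
  simp only [Fin.sum_univ_four, sum_xCoords, xiVF, Matrix.cons_val]
  ring

theorem sum_xiVF_horizontal_mul_vertical (p : Fin 7 → ℝ) :
    ∑ i : Fin 4, (∑ k ∈ xCoords, p k * xiVF i p k) * (∑ k ∈ tCoords, p k * xiVF i p k) = 0 := by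
  simp only [Fin.sum_univ_four, sum_xCoords, sum_tCoords, xiVF, Matrix.cons_val]
  ring

theorem horizontal_gradient_sq_rotational_general
    (s : Set ℝ) (hs : IsOpen s) (hsub : s ⊆ Ioi 0)
    (f : ℝ → ℝ) (hf : ContDiffOn ℝ 1 f s)
    (p : Fin 7 → ℝ) (hr : nx p ∈ s) (htpos : 0 < nt p) :
    ∑ i : Fin 4, (xiD i (fun q => nt q - f (nx q)) p) ^ 2 =
      4 * nx p ^ 2 + (deriv f (nx p)) ^ 2 := by
  have hx : nx p ≠ 0 := (hsub hr).ne'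
  have ht : nt p ≠ 0 := htpos.ne'
  have hfd : DifferentiableAt ℝ f (nx p) :=
    (hf.differentiableOn one_ne_zero).differentiableAt (hs.mem_nhds hr)
  have hx2 : nx p ^ 2 = ∑ k ∈ xCoords, p k ^ 2 := by rw [nx_eq, Real.sq_sqrt (by positivity)]
  have ht2 : nt p ^ 2 = ∑ k ∈ tCoords, p k ^ 2 := by rw [nt_eq, Real.sq_sqrt (by positivity)]
  have hexpand : ∀ A B c : ℝ, (A / nt p - c * B / nx p) ^ 2 =
      A ^ 2 / nt p ^ 2 - 2 * c / (nt p * nx p) * (B * A) + c ^ 2 / nx p ^ 2 * B ^ 2 := by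
    intro A B c; field_simp; ring
  simp only [xiD_sub_comp_nx hfd hx ht, hexpand]
  rw [Finset.sum_add_distrib, Finset.sum_sub_distrib, ← Finset.sum_div, ← Finset.mul_sum,
    ← Finset.mul_sum, sum_xiVF_vertical_sq, sum_xiVF_horizontal_mul_vertical,
    sum_xiVF_horizontal_sq, mul_zero, sub_zero, ← hx2, ← ht2]
  field_simp

/-- For `u(x,t) = ‖t‖ − f(‖x‖)`, at points with `r = ‖x‖ > 0` in the domain of `f`
and `‖t‖ > 0`, the squared norm of the horizontal gradient is
`Σᵢ (ξᵢu)² = 4r² + f′(r)²`. -/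
theorem horizontal_gradient_sq_rotational
    (s : Set ℝ) (hs : IsOpen s) (hsord : s.OrdConnected) (hsub : s ⊆ Ioi 0)
    (f : ℝ → ℝ) (hf : ContDiffOn ℝ 1 f s)
    (p : Fin 7 → ℝ) (hr : nx p ∈ s) (htpos : 0 < nt p) :
    ∑ i : Fin 4, (xiD i (fun q => nt q - f (nx q)) p) ^ 2 =
      4 * nx p ^ 2 + (deriv f (nx p)) ^ 2 :=
  horizontal_gradient_sq_rotational_general s hs hsub f hf p hr htpos
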